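/- arXiv:2304.12422 — 3 statements merged into one kernel-verified Lean document; each statement's English description precedes it below -/
import Mathlib

section
/- (Linearity of Rademacher complexity under convex combination minus a class) Let H be a class of functions X → [0,1], Q a sample of size n, and let H̄ = {Σ_{l∈L} α_l h_l : h_l ∈ H} for fixed weights α_l ≥ 0 with Σ_l α_l = 1 over a finite index set L. Then Rad_Q(H̄ - H) = 2 Rad_Q(H), where H̄ - H = {g - h : g ∈ H̄, h ∈ H}. -/
/-- Empirical Rademacher complexity of a class of real-valued functions on a
sample `x` of size `n`. -/
noncomputable def rad {X : Type*} (n : ℕ) (x : Fin n → X) (F : Set (X → ℝ)) : ℝ :=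
  (1 / 2 ^ n : ℝ) * ∑ σ : Fin n → Bool,
    ⨆ f : F, (1 / n : ℝ) * ∑ i, (if σ i then (1 : ℝ) else -1) * (f : X → ℝ) (x i)

section aux
variable {X : Type*}

/-- The summand. -/
noncomputable def Sval (n : ℕ) (x : Fin n → X) (σ : Fin n → Bool) (f : X → ℝ) : ℝ :=
  (1 / n : ℝ) * ∑ i, (if σ i then (1 : ℝ) else -1) * f (x i)

lemma Sval_le {n : ℕ} {x : Fin n → X} {σ : Fin n → Bool} {f : X → ℝ}
    (hf : ∀ a, f a ∈ Set.Icc (-1:ℝ) 1) : Sval n x σ f ≤ 1 := by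
  unfold Sval
  have h1 : ∀ i : Fin n, (if σ i then (1:ℝ) else -1) * f (x i) ≤ 1 := by
    intro i
    rcases hf (x i) with ⟨h1, h2⟩
    by_cases h : σ i <;> simp [h] <;> linarith
  calc (1 / n : ℝ) * ∑ i, (if σ i then (1:ℝ) else -1) * f (x i)
      ≤ (1 / n : ℝ) * ∑ _i : Fin n, (1:ℝ) := by
        apply mul_le_mul_of_nonneg_left (Finset.sum_le_sum fun i _ => h1 i)
        positivity
    _ ≤ 1 := by
        rcases Nat.eq_zero_or_pos n with h | h
        · simp [h]
        · simp only [Finset.sum_const, Finset.card_univ, Fintype.card_fin, nsmul_eq_mul,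
            mul_one]
          rw [one_div, inv_mul_cancel₀ (by positivity)]

lemma bdd_Sval {n : ℕ} {x : Fin n → X} {σ : Fin n → Bool} {F : Set (X → ℝ)}
    (hF : ∀ f ∈ F, ∀ a, f a ∈ Set.Icc (-1:ℝ) 1) :
    BddAbove (Set.range fun f : F => Sval n x σ (f : X → ℝ)) := by
  refine ⟨1, ?_⟩
  rintro y ⟨⟨f, hf⟩, rfl⟩
  exact Sval_le (hF f hf)

end aux

/-- Rad_Q(H̄ − H) = 2 Rad_Q(H) where H̄ is the class of fixed convex combinations
of hypotheses from H. -/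
theorem stmt5 {X : Type*} (n : ℕ) (hn : 0 < n) (x : Fin n → X)
    (H : Set (X → ℝ)) (hne : H.Nonempty)
    (hb : ∀ h ∈ H, ∀ a, h a ∈ Set.Icc (0:ℝ) 1)
    {L : Type*} [Fintype L]
    (α : L → ℝ) (hα : ∀ l, 0 ≤ α l) (hsum : ∑ l, α l = 1)
    (Hbar : Set (X → ℝ))
    (hHbar : Hbar = {g | ∃ h : L → (X → ℝ), (∀ l, h l ∈ H) ∧
      g = fun a => ∑ l, α l * h l a}) :
    rad n x (Set.image2 (· - ·) Hbar H) = 2 * rad n x H := by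
  classical
  -- basic facts
  have hb1 : ∀ h ∈ H, ∀ a, h a ∈ Set.Icc (-1:ℝ) 1 := fun h hh a =>
    ⟨by linarith [(hb h hh a).1], (hb h hh a).2⟩
  have hHbarb : ∀ g ∈ Hbar, ∀ a, g a ∈ Set.Icc (0:ℝ) 1 := by
    rintro g hg a
    rw [hHbar] at hg
    obtain ⟨h, hh, rfl⟩ := hg
    constructor
    · exact Finset.sum_nonneg fun l _ => mul_nonneg (hα l) (hb _ (hh l) a).1
    · calc ∑ l, α l * h l a ≤ ∑ l, α l * 1 :=
            Finset.sum_le_sum fun l _ => mul_le_mul_of_nonneg_left (hb _ (hh l) a).2 (hα l)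
        _ = 1 := by simp [hsum]
  have hHbarb1 : ∀ g ∈ Hbar, ∀ a, g a ∈ Set.Icc (-1:ℝ) 1 := fun g hg a =>
    ⟨by linarith [(hHbarb g hg a).1], (hHbarb g hg a).2⟩
  have hD : ∀ f ∈ Set.image2 (· - ·) Hbar H, ∀ a, f a ∈ Set.Icc (-1:ℝ) 1 := by
    rintro f ⟨g, hg, h, hh, rfl⟩ a
    have h1 := hHbarb g hg a
    have h2 := hb h hh a
    simp only [Pi.sub_apply, Set.mem_Icc] at *
    constructor <;> linarith [h1.1, h1.2, h2.1, h2.2]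
  have hHbarne : Hbar.Nonempty := by
    obtain ⟨h0, hh0⟩ := hne
    refine ⟨fun a => ∑ l, α l * h0 a, ?_⟩
    rw [hHbar]; exact ⟨fun _ => h0, fun _ => hh0, rfl⟩
  have hDne : (Set.image2 (· - ·) Hbar H).Nonempty := hHbarne.image2 hne
  haveI : Nonempty H := hne.to_subtype
  haveI : Nonempty Hbar := hHbarne.to_subtype
  haveI : Nonempty (Set.image2 (· - ·) Hbar H) := hDne.to_subtype
  -- key: sup over Hbar equals sup over H
  have key1 : ∀ σ : Fin n → Bool,
      (⨆ g : Hbar, Sval n x σ g) = ⨆ h : H, Sval n x σ h := by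
    intro σ
    apply le_antisymm
    · apply ciSup_le
      rintro ⟨g, hg⟩
      rw [hHbar] at hg
      obtain ⟨h, hh, rfl⟩ := hg
      have expand : Sval n x σ (fun a => ∑ l, α l * h l a)
          = ∑ l, α l * Sval n x σ (h l) := by
        unfold Sval
        simp_rw [Finset.mul_sum]
        rw [Finset.sum_comm]
        exact Finset.sum_congr rfl fun l _ => Finset.sum_congr rfl fun i _ => by ring
      rw [expand]
      calc ∑ l, α l * Sval n x σ (h l)
          ≤ ∑ l, α l * (⨆ h' : H, Sval n x σ h') := by
            refine Finset.sum_le_sum fun l _ => mul_le_mul_of_nonneg_left ?_ (hα l)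
            exact le_ciSup (bdd_Sval hb1) ⟨h l, hh l⟩
        _ = ⨆ h' : H, Sval n x σ h' := by rw [← Finset.sum_mul, hsum, one_mul]
    · apply ciSup_le
      rintro ⟨h, hh⟩
      have hmem : (fun a => ∑ l, α l * h a) ∈ Hbar := by
        rw [hHbar]; exact ⟨fun _ => h, fun _ => hh, rfl⟩
      have heq : (fun a => ∑ l, α l * h a) = h := by
        ext a; rw [← Finset.sum_mul, hsum, one_mul]
      have hle : Sval n x σ (fun a => ∑ l, α l * h a) ≤ ⨆ g : Hbar, Sval n x σ (g : X → ℝ) :=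
        le_ciSup (bdd_Sval hHbarb1) ⟨_, hmem⟩
      rwa [heq] at hle
  -- split sup over the difference class
  have key2 : ∀ σ : Fin n → Bool,
      (⨆ f : (Set.image2 (· - ·) Hbar H), Sval n x σ f)
        = (⨆ g : Hbar, Sval n x σ g) + ⨆ h : H, Sval n x (fun i => !(σ i)) h := by
    intro σ
    have split : ∀ (g h : X → ℝ),
        Sval n x σ (g - h) = Sval n x σ g + Sval n x (fun i => !(σ i)) h := by
      intro g h
      unfold Sval
      rw [← mul_add, ← Finset.sum_add_distrib]
      congr 1; congr 1; ext i
      by_cases hσ : σ i <;> simp [hσ, Pi.sub_apply] <;> ring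
    apply le_antisymm
    · apply ciSup_le
      rintro ⟨f, hf⟩
      obtain ⟨g, hg, h, hh, rfl⟩ := hf
      simp only
      rw [split]
      exact add_le_add (le_ciSup (bdd_Sval hHbarb1) ⟨g, hg⟩)
        (le_ciSup (bdd_Sval hb1) ⟨h, hh⟩)
    · have hpt : ∀ (g : Hbar) (h : H), Sval n x σ (g : X → ℝ) + Sval n x (fun i => !(σ i)) (h : X → ℝ)
          ≤ ⨆ f : (Set.image2 (· - ·) Hbar H), Sval n x σ (f : X → ℝ) := by
        rintro ⟨g, hg⟩ ⟨h, hh⟩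
        rw [← split]
        exact le_ciSup (bdd_Sval hD) ⟨g - h, Set.mem_image2_of_mem hg hh⟩
      have step1 : ∀ g : Hbar, Sval n x σ (g : X → ℝ) + (⨆ h : H, Sval n x (fun i => !(σ i)) (h : X → ℝ))
          ≤ ⨆ f : (Set.image2 (· - ·) Hbar H), Sval n x σ (f : X → ℝ) := by
        intro g
        rw [← le_sub_iff_add_le']
        exact ciSup_le fun h => le_sub_iff_add_le'.mpr (hpt g h)
      rw [← le_sub_iff_add_le]
      exact ciSup_le fun g => le_sub_iff_add_le.mpr (step1 g)
  -- assemble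
  have hEq : ∀ F : Set (X → ℝ), rad n x F = (1 / 2 ^ n : ℝ) *
      ∑ σ : Fin n → Bool, ⨆ f : F, Sval n x σ (f : X → ℝ) := fun F => rfl
  rw [hEq, hEq]
  simp_rw [key2, key1, Finset.sum_add_distrib]
  have flip : (∑ σ : Fin n → Bool, ⨆ h : H, Sval n x (fun i => !(σ i)) h)
      = ∑ σ : Fin n → Bool, ⨆ h : H, Sval n x σ h := by
    apply Fintype.sum_bijective (fun σ : Fin n → Bool => fun i => !(σ i))
    · exact Function.Involutive.bijective (fun σ => by ext i; simp)
    · intro σ; rfl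
  rw [flip]
  ring
end

section
/- (Contraction for absolute value) For any sample Q of size n and any class F of real-valued functions on X, the empirical Rademacher complexity of the class |F| = {x ↦ |f(x)| : f ∈ F} satisfies Rad_Q(|F|) ≤ Rad_Q(F), since the absolute value is 1-Lipschitz and vanishes at 0. -/
open Finset

lemma LipschitzWith.abs_sub_le {ψ : ℝ → ℝ} (hψ : LipschitzWith 1 ψ) (a b : ℝ) :
    |ψ a - ψ b| ≤ |a - b| := by
  simpa [Real.dist_eq] using hψ.dist_le_mul a b

lemma ciSup_add_ciSup_sub_le {ι : Type*} {R u p : ι → ℝ}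
    (hadd : BddAbove (Set.range fun k => R k + p k))
    (hsub : BddAbove (Set.range fun k => R k - p k))
    (h : ∀ k l, u k - u l ≤ |p k - p l|) :
    (⨆ k, R k + u k) + (⨆ k, R k - u k) ≤ (⨆ k, R k + p k) + (⨆ k, R k - p k) := by
  cases isEmpty_or_nonempty ι
  · simp
  rw [← le_sub_iff_add_le]
  refine ciSup_le fun k => ?_
  rw [le_sub_iff_add_le', ← le_sub_iff_add_le]
  refine ciSup_le fun l => ?_
  rw [le_sub_iff_add_le']
  have hkl := h k l
  rcases le_total (p l) (p k) with hp | hp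
  · rw [abs_of_nonneg (sub_nonneg.2 hp)] at hkl
    have := add_le_add (le_ciSup hadd k) (le_ciSup hsub l)
    linarith
  · rw [abs_of_nonpos (sub_nonpos.2 hp)] at hkl
    have := add_le_add (le_ciSup hadd l) (le_ciSup hsub k)
    linarith

namespace Rademacher

def sign (b : Bool) : ℝ := if b then 1 else -1

lemma abs_sign (b : Bool) : |sign b| = 1 := by cases b <;> simp [sign]

lemma sign_not (b : Bool) : sign (!b) = -sign b := by cases b <;> simp [sign]

variable {ι : Type*} {n : ℕ}

noncomputable def supCorrelation (σ : Fin n → Bool) (w : ι → Fin n → ℝ) : ℝ :=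
  ⨆ k, ∑ i, sign (σ i) * w k i

noncomputable def rademacherSum (w : ι → Fin n → ℝ) : ℝ :=
  ∑ σ : Fin n → Bool, supCorrelation σ w

lemma bddAbove_range_sum_sign_mul (σ : Fin n → Bool) {w : ι → Fin n → ℝ} {C : ℝ}
    (hC : ∀ k i, |w k i| ≤ C) : BddAbove (Set.range fun k => ∑ i, sign (σ i) * w k i) := by
  refine ⟨∑ _i : Fin n, C, ?_⟩
  rintro _ ⟨k, rfl⟩
  refine sum_le_sum fun i _ => (le_abs_self _).trans ?_
  rw [abs_mul, abs_sign, one_mul]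
  exact hC k i

def flipAt (j : Fin n) (σ : Fin n → Bool) : Fin n → Bool := Function.update σ j (!σ j)

lemma flipAt_involutive (j : Fin n) : Function.Involutive (flipAt j) := by
  intro σ
  simp [flipAt]

lemma sum_comp_flipAt {M : Type*} [AddCommMonoid M] (j : Fin n) (H : (Fin n → Bool) → M) :
    ∑ σ, H (flipAt j σ) = ∑ σ, H σ :=
  Equiv.sum_comp (flipAt_involutive j).toPerm H

lemma sum_sign_mul_eq_add (j : Fin n) {σ τ : Fin n → Bool} {y z : Fin n → ℝ}
    (hτ : ∀ i ≠ j, τ i = σ i) (hy : ∀ i ≠ j, y i = z i) :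
    ∑ i, sign (τ i) * y i = ∑ i ∈ univ.erase j, sign (σ i) * z i + sign (τ j) * y j := by
  rw [← sum_erase_add _ _ (mem_univ j)]
  congr 1
  refine sum_congr rfl fun i hi => ?_
  rw [hτ i (ne_of_mem_erase hi), hy i (ne_of_mem_erase hi)]

theorem supCorrelation_update_add_le (σ : Fin n → Bool) (j : Fin n) {ψ : ℝ → ℝ}
    (hψ : LipschitzWith 1 ψ) {w : ι → Fin n → ℝ} {C : ℝ} (hC : ∀ k i, |w k i| ≤ C) :
    supCorrelation σ (fun k => Function.update (w k) j (ψ (w k j))) +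
        supCorrelation (flipAt j σ) (fun k => Function.update (w k) j (ψ (w k j))) ≤
      supCorrelation σ w + supCorrelation (flipAt j σ) w := by
  set R : ι → ℝ := fun k => ∑ i ∈ univ.erase j, sign (σ i) * w k i
  set t := sign (σ j)
  have hflip : ∀ i ≠ j, flipAt j σ i = σ i := fun i hi => Function.update_of_ne hi _ _
  have hflip_sign : sign (flipAt j σ j) = -t := by simp [flipAt, sign_not, t]
  have hupd : ∀ k, ∀ i ≠ j, Function.update (w k) j (ψ (w k j)) i = w k i :=
    fun k i hi => Function.update_of_ne hi _ _
  have e₁ : supCorrelation σ (fun k => Function.update (w k) j (ψ (w k j))) =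
      ⨆ k, R k + t * ψ (w k j) := by
    simp only [supCorrelation, sum_sign_mul_eq_add j (fun _ _ => rfl) (hupd _),
      Function.update_self, R, t]
  have e₂ : supCorrelation (flipAt j σ) (fun k => Function.update (w k) j (ψ (w k j))) =
      ⨆ k, R k - t * ψ (w k j) := by
    simp only [supCorrelation, sum_sign_mul_eq_add j hflip (hupd _), hflip_sign,
      Function.update_self, neg_mul, ← sub_eq_add_neg, R, t]
  have e₃ : supCorrelation σ w = ⨆ k, R k + t * w k j := by
    simp only [supCorrelation, sum_sign_mul_eq_add j (fun _ _ => rfl) (fun _ _ => rfl), R, t]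
  have e₄ : supCorrelation (flipAt j σ) w = ⨆ k, R k - t * w k j := by
    simp only [supCorrelation, sum_sign_mul_eq_add j hflip (fun _ _ => rfl), hflip_sign,
      neg_mul, ← sub_eq_add_neg, R, t]
  rw [e₁, e₂, e₃, e₄]
  refine ciSup_add_ciSup_sub_le ?_ ?_ fun k l => ?_
  · simpa only [sum_sign_mul_eq_add j (fun _ _ => rfl) (fun _ _ => rfl)] using
      bddAbove_range_sum_sign_mul σ hC
  · simpa only [sum_sign_mul_eq_add j hflip (fun _ _ => rfl), hflip_sign, neg_mul,
      ← sub_eq_add_neg] using bddAbove_range_sum_sign_mul (flipAt j σ) hC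
  · calc t * ψ (w k j) - t * ψ (w l j) = t * (ψ (w k j) - ψ (w l j)) := by ring
      _ ≤ |t| * |ψ (w k j) - ψ (w l j)| := by rw [← abs_mul]; exact le_abs_self _
      _ ≤ |t| * |w k j - w l j| := mul_le_mul_of_nonneg_left (hψ.abs_sub_le _ _) (abs_nonneg t)
      _ = |t * w k j - t * w l j| := by rw [← abs_mul, mul_sub]

theorem rademacherSum_update_le (j : Fin n) {ψ : ℝ → ℝ} (hψ : LipschitzWith 1 ψ)
    {w : ι → Fin n → ℝ} {C : ℝ} (hC : ∀ k i, |w k i| ≤ C) :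
    rademacherSum (fun k => Function.update (w k) j (ψ (w k j))) ≤ rademacherSum w := by
  have hsum := sum_le_sum fun σ (_ : σ ∈ univ) => supCorrelation_update_add_le σ j hψ hC
  rw [sum_add_distrib, sum_add_distrib, sum_comp_flipAt j (supCorrelation · w),
    sum_comp_flipAt j (supCorrelation · _)] at hsum
  unfold rademacherSum
  linarith

theorem rademacherSum_comp_le {φ : Fin n → ℝ → ℝ} (hφ : ∀ i, LipschitzWith 1 (φ i))
    {w : ι → Fin n → ℝ} {C : ℝ} (hC : ∀ k i, |w k i| ≤ C) :
    rademacherSum (fun k i => φ i (w k i)) ≤ rademacherSum w := by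
  suffices h : ∀ s : Finset (Fin n),
      rademacherSum (fun k i => if i ∈ s then φ i (w k i) else w k i) ≤ rademacherSum w by
    simpa using h univ
  intro s
  induction s using Finset.induction_on generalizing C w with
  | empty => simp
  | insert j s hj ih =>
    set w' : ι → Fin n → ℝ := fun k => Function.update (w k) j (φ j (w k j))
    have hw' : ∀ k i, |w' k i| ≤ |φ j 0| + C := by
      intro k i
      rcases eq_or_ne i j with rfl | hi
      · have hφ0 := (hφ i).abs_sub_le (w k i) 0
        rw [sub_zero] at hφ0
        simp only [w', Function.update_self]
        linarith [abs_sub_abs_le_abs_sub (φ i (w k i)) (φ i 0), hC k i]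
      · simpa [w', hi] using (hC k i).trans (le_add_of_nonneg_left (abs_nonneg _))
    have hsplit : (fun k i => if i ∈ insert j s then φ i (w k i) else w k i) =
        fun k i => if i ∈ s then φ i (w' k i) else w' k i := by
      funext k i
      rcases eq_or_ne i j with rfl | hi
      · simp [w', hj]
      · simp [w', hi]
    rw [hsplit]
    exact (ih hw').trans (rademacherSum_update_le j (hφ j) hC)

end Rademacher

open Rademacher in
lemma rad_image {X : Type*} (n : ℕ) (x : Fin n → X) (F : Set (X → ℝ))
    (g : (X → ℝ) → X → ℝ) :
    rad n x (g '' F) = 1 / 2 ^ n * (1 / n) * rademacherSum (fun (f : F) i => g f (x i)) := by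
  rw [rad, rademacherSum, mul_assoc]
  congr 1
  rw [mul_sum]
  refine sum_congr rfl fun σ _ => ?_
  rw [supCorrelation, Real.mul_iSup_of_nonneg (by positivity),
    ← Set.imageFactorization_surjective.iSup_comp]
  rfl

open Rademacher in
theorem stmt9_general {X : Type*} (n : ℕ) (x : Fin n → X)
    (F : Set (X → ℝ))
    (hbdd : ∃ C, ∀ f ∈ F, ∀ a, |f a| ≤ C) :
    rad n x ((fun f => fun a => |f a|) '' F) ≤ rad n x F := by
  obtain ⟨C, hC⟩ := hbdd
  have hF := rad_image n x F id
  rw [Set.image_id] at hF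
  rw [rad_image, hF]
  gcongr
  exact rademacherSum_comp_le (fun _ => lipschitzWith_one_norm) fun (f : F) i => hC f f.2 (x i)

/-- Contraction for the absolute value: Rad_Q(|F|) ≤ Rad_Q(F). -/
theorem stmt9 {X : Type*} (n : ℕ) (hn : 0 < n) (x : Fin n → X)
    (F : Set (X → ℝ)) (hne : F.Nonempty)
    (hbdd : ∃ C, ∀ f ∈ F, ∀ a, |f a| ≤ C) :
    rad n x ((fun f => fun a => |f a|) '' F) ≤ rad n x F :=
  stmt9_general n x F hbdd
end

section
/- (Hypothesis combination noise bound) Let H be a class of functions X → {0,1}, L a finite set with weights α_l summing to 1, h_t = Σ_l α_l h_l with each h_l ∈ H, and h_s ∈ H. If Q is an i.i.d. sample of size n from distribution D_t, then for any δ ∈ (0,1), with probability at least 1 − δ, E_{x~D_t}[|h_t(x) − h_s(x)|] ≤ (1/n) Σ_{i=1}^n |h_t(x_i) − h_s(x_i)| + 4 Rad_Q(H) + 3 √(log(2/δ)/(2n)). -/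
/-!
For fixed `h_t` and `h_s` the loss `|h_t - h_s|` is one `[0,1]`-valued function, so Hoeffding's
inequality for the i.i.d. sample already bounds its expectation by the empirical mean plus
`√(log (1/δ) / (2n))`, except with probability `δ`. The Rademacher term is nonnegative and the
stated radius `3 √(log (2/δ) / (2n))` is larger, so both only loosen this bound.
-/

open MeasureTheory

open ProbabilityTheory

section Hoeffding

variable {X : Type*} [MeasurableSpace X] {μ : Measure X} [IsProbabilityMeasure μ] {g : X → ℝ}

lemma hasSubgaussianMGF_integral_sub_comp_eval (hg : Measurable g)
    (hg01 : ∀ x, g x ∈ Set.Icc (0 : ℝ) 1) {n : ℕ} (i : Fin n) :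
    HasSubgaussianMGF (fun Q : Fin n → X => μ[g] - g (Q i)) ((1 / 2) ^ 2)
      (Measure.pi fun _ => μ) := by
  have hgi : Measurable fun Q : Fin n → X => g (Q i) := hg.comp (measurable_pi_apply i)
  have hmean : ∫ Q, (μ[g] - g (Q i)) ∂(Measure.pi fun _ => μ) = 0 := by
    rw [integral_sub (integrable_const _)
      (.of_mem_Icc 0 1 hgi.aemeasurable (ae_of_all _ fun Q => hg01 (Q i))),
      integral_comp_eval (μ := fun _ => μ) hg.aestronglyMeasurable]
    simp
  have hbound (Q : Fin n → X) : μ[g] - g (Q i) ∈ Set.Icc (μ[g] - 1) μ[g] := by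
    obtain ⟨h0, h1⟩ := hg01 (Q i)
    constructor <;> linarith
  convert hasSubgaussianMGF_of_mem_Icc_of_integral_eq_zero
    (hgi.const_sub _).aemeasurable (ae_of_all _ hbound) hmean using 1
  rw [sub_sub_cancel, nnnorm_one]

lemma measureReal_sum_integral_sub_ge_le (hg : Measurable g)
    (hg01 : ∀ x, g x ∈ Set.Icc (0 : ℝ) 1) (n : ℕ) {ε : ℝ} (hε : 0 ≤ ε) :
    (Measure.pi fun _ : Fin n => μ).real {Q | ε ≤ ∑ i, (μ[g] - g (Q i))} ≤
      Real.exp (-2 * ε ^ 2 / n) := by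
  have hindep : iIndepFun (fun (i : Fin n) (Q : Fin n → X) => μ[g] - g (Q i))
      (Measure.pi fun _ => μ) :=
    iIndepFun_pi (X := fun _ x => μ[g] - g x) fun _ => (measurable_const.sub hg).aemeasurable
  convert HasSubgaussianMGF.measure_sum_ge_le_of_iIndepFun hindep
    (fun i _ => hasSubgaussianMGF_integral_sub_comp_eval hg hg01 i) hε using 2
  push_cast
  rw [Finset.sum_const, Finset.card_univ, Fintype.card_fin, nsmul_eq_mul]
  ring

lemma ofReal_one_sub_exp_le_measure_integral_le_mean_add (hg : Measurable g)
    (hg01 : ∀ x, g x ∈ Set.Icc (0 : ℝ) 1) {n : ℕ} (hn : 0 < n) {ε : ℝ} (hε : 0 ≤ ε) :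
    ENNReal.ofReal (1 - Real.exp (-2 * n * ε ^ 2)) ≤
      (Measure.pi fun _ : Fin n => μ) {Q | μ[g] ≤ (1 / n : ℝ) * ∑ i, g (Q i) + ε} := by
  set good := {Q : Fin n → X | μ[g] ≤ (1 / n : ℝ) * ∑ i, g (Q i) + ε}
  have hnR : (0 : ℝ) < n := Nat.cast_pos.2 hn
  have hgood : MeasurableSet good :=
    measurableSet_le measurable_const <|
      ((Finset.measurable_sum _ fun i _ => hg.comp (measurable_pi_apply i)).const_mul _).add_const _
  have hbad : goodᶜ ⊆ {Q | n * ε ≤ ∑ i, (μ[g] - g (Q i))} := by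
    intro Q hQ
    simp only [good, Set.mem_compl_iff, Set.mem_ofPred_eq, not_le] at hQ ⊢
    rw [Finset.sum_sub_distrib, Finset.sum_const, Finset.card_univ, Fintype.card_fin, nsmul_eq_mul]
    have h := mul_lt_mul_of_pos_left hQ hnR
    rw [mul_add, ← mul_assoc, mul_one_div_cancel hnR.ne', one_mul] at h
    linarith
  have htail : (Measure.pi fun _ : Fin n => μ).real goodᶜ ≤ Real.exp (-2 * n * ε ^ 2) := by
    calc _ ≤ (Measure.pi fun _ : Fin n => μ).real {Q | n * ε ≤ ∑ i, (μ[g] - g (Q i))} :=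
          measureReal_mono hbad
      _ ≤ Real.exp (-2 * (n * ε) ^ 2 / n) :=
          measureReal_sum_integral_sub_ge_le hg hg01 n (by positivity)
      _ = Real.exp (-2 * n * ε ^ 2) := by field_simp
  rw [ENNReal.ofReal_le_iff_le_toReal (measure_ne_top _ _), ← measureReal_def]
  rw [probReal_compl_eq_one_sub hgood] at htail
  linarith

end Hoeffding

-- Flipping every sign negates the correlation with `f₀`, which therefore averages to zero.
lemma rad_nonneg {X : Type*} {n : ℕ} (x : Fin n → X) {F : Set (X → ℝ)} {f₀ : X → ℝ}
    (hf₀ : f₀ ∈ F) {C : ℝ} (hC : ∀ f ∈ F, ∀ a, |f a| ≤ C) : 0 ≤ rad n x F := by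
  set corr : (Fin n → Bool) → (X → ℝ) → ℝ :=
    fun σ f => (1 / n : ℝ) * ∑ i, (if σ i then (1 : ℝ) else -1) * f (x i)
  have hbdd (σ : Fin n → Bool) : BddAbove (Set.range fun f : F => corr σ f) := by
    refine ⟨(1 / n : ℝ) * ∑ _i : Fin n, C, Set.forall_mem_range.2 fun f => ?_⟩
    refine mul_le_mul_of_nonneg_left (Finset.sum_le_sum fun i _ => ?_) (by positivity)
    refine (le_abs_self _).trans ?_
    split_ifs <;> simpa using hC f f.2 (x i)
  have hflip : ∑ σ, corr σ f₀ = -∑ σ, corr σ f₀ := by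
    rw [← Finset.sum_neg_distrib]
    refine Fintype.sum_equiv (Equiv.piCongrRight fun _ => Equiv.boolNot) _ _ fun σ => ?_
    simp only [corr, ← mul_neg, ← Finset.sum_neg_distrib]
    congr 1
    refine Finset.sum_congr rfl fun i _ => ?_
    cases hσ : σ i <;> simp [hσ]
  have hsum : 0 ≤ ∑ σ, ⨆ f : F, corr σ f :=
    calc (0 : ℝ) = ∑ σ, corr σ f₀ := by linarith
      _ ≤ ∑ σ, ⨆ f : F, corr σ f :=
          Finset.sum_le_sum fun σ _ => le_ciSup (f := fun f : F => corr σ f) (hbdd σ) ⟨f₀, hf₀⟩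
  exact mul_nonneg (by positivity) hsum

lemma exp_neg_two_mul_mul_sq_three_sqrt_log_le {n : ℕ} (hn : 0 < n) {δ : ℝ} (hδ0 : 0 < δ)
    (hδ2 : δ ≤ 2) :
    Real.exp (-2 * n * (3 * Real.sqrt (Real.log (2 / δ) / (2 * n))) ^ 2) ≤ δ := by
  have hlog : 0 ≤ Real.log (2 / δ) := Real.log_nonneg ((one_le_div hδ0).2 hδ2)
  calc Real.exp (-2 * n * (3 * Real.sqrt (Real.log (2 / δ) / (2 * n))) ^ 2)
        = Real.exp (-(9 * Real.log (2 / δ))) := by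
        rw [mul_pow, Real.sq_sqrt (by positivity)]
        congr 1
        field_simp
        ring
    _ ≤ Real.exp (-Real.log (2 / δ)) := Real.exp_le_exp.2 (by linarith)
    _ = δ / 2 := by rw [Real.exp_neg, Real.exp_log (by positivity), inv_div]
    _ ≤ δ := by linarith

/-- Hypothesis combination noise bound: with probability ≥ 1 − δ over an i.i.d.
sample Q of size n from D_t,
ε_t(h_t,h_s) ≤ empirical version + 4 Rad_Q(H) + 3 √(log(2/δ)/(2n)). -/
theorem stmt11 {X : Type*} [MeasurableSpace X] (Dt : Measure X) [IsProbabilityMeasure Dt]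
    (H : Set (X → ℝ)) (hm : ∀ h ∈ H, Measurable h)
    (hbin : ∀ h ∈ H, ∀ a, h a = 0 ∨ h a = 1)
    {L : Type*} [Fintype L]
    (α : L → ℝ) (hα : ∀ l, 0 ≤ α l) (hsum : ∑ l, α l = 1)
    (hl : L → (X → ℝ)) (hlH : ∀ l, hl l ∈ H)
    (hs : X → ℝ) (hsH : hs ∈ H)
    (ht : X → ℝ) (hht : ht = fun a => ∑ l, α l * hl l a)
    (n : ℕ) (hn : 0 < n) (δ : ℝ) (hδ : δ ∈ Set.Ioo (0:ℝ) 1) :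
    ENNReal.ofReal (1 - δ) ≤
      (Measure.pi fun _ : Fin n => Dt)
        {Q : Fin n → X |
          ∫ x, |ht x - hs x| ∂Dt ≤
            (1 / n : ℝ) * (∑ i, |ht (Q i) - hs (Q i)|) + 4 * rad n Q H
              + 3 * Real.sqrt (Real.log (2 / δ) / (2 * n))} := by
  obtain ⟨hδ0, hδ1⟩ := hδ
  have hH01 (h : X → ℝ) (hh : h ∈ H) (a : X) : h a ∈ Set.Icc (0 : ℝ) 1 := by
    rcases hbin h hh a with h0 | h1 <;> simp [*]
  have hht01 (a : X) : ht a ∈ Set.Icc (0 : ℝ) 1 := by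
    simpa [hht] using (convex_Icc (0 : ℝ) 1).sum_mem (fun l _ => hα l) hsum
      fun l _ => hH01 _ (hlH l) a
  have hg01 (a : X) : |ht a - hs a| ∈ Set.Icc (0 : ℝ) 1 :=
    ⟨abs_nonneg _, abs_sub_le_of_nonneg_of_le (hht01 a).1 (hht01 a).2
      (hH01 hs hsH a).1 (hH01 hs hsH a).2⟩
  have hg : Measurable fun a => |ht a - hs a| := by
    subst hht
    exact ((Finset.measurable_sum _ fun l _ => (hm _ (hlH l)).const_mul _).sub (hm hs hsH)).abs
  have hexp := exp_neg_two_mul_mul_sq_three_sqrt_log_le hn hδ0 (by linarith)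
  refine (ENNReal.ofReal_le_ofReal (by linarith)).trans
    ((ofReal_one_sub_exp_le_measure_integral_le_mean_add hg hg01 hn (by positivity)).trans
      (measure_mono fun Q hQ => ?_))
  have hrad : 0 ≤ rad n Q H :=
    rad_nonneg Q hsH fun h hh a => abs_le.2 ⟨by linarith [(hH01 h hh a).1], (hH01 h hh a).2⟩
  simp only [Set.mem_ofPred_eq] at hQ ⊢
  linarith
end
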